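/- Let R be a commutative ℚ-algebra, let f, g ∈ R[t], and let n ≥ 1. Then the (n−1)-st derivative of the Wronskian fg′ − f′g is given by (fg′ − f′g)^{(n−1)} = Σ_{i=0}^{n} d_{i,n−i} f^{(i)} g^{(n−i)}, where d_{i,j} = (j−i)·(i+j−1)!/(i!·j!) for i+j ≥ 1 (equivalently, d_{i,n−i} = (n−2i)(n−1)!/(i!(n−i)!)). In particular, the coefficients d_{i,j} are the unique solution of the recurrence d_{i,j} = d_{i−1,j} + d_{i,j−1} for i,j ≥ 1 with boundary values d_{0,j} = 1 = −d_{j,0} for j ≥ 1 and d_{0,0} = 0, and they satisfy d_{i,j} = −d_{j,i}. -/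

import Mathlib

/-!
By Leibniz' rule, `(fg')^{(n-1)}` and `(f'g)^{(n-1)}` contribute the binomial coefficients
`C(n-1,i)` and `C(n-1,n-i)` to `f^{(i)} g^{(n-i)}`, and `d_{i,j} = C(i+j-1,i) - C(i+j-1,j)`.
In this form the recurrence is Pascal's rule, and a solution of the recurrence is determined by
its values on the two axes.
-/

noncomputable section

namespace WittOM

/-- The coefficients `d_{i,j} = (j-i)·(i+j-1)!/(i!·j!)`. -/
def dcoef (i j : ℕ) : ℚ :=
  ((j : ℚ) - (i : ℚ)) * (Nat.factorial (i + j - 1)) / (Nat.factorial i * Nat.factorial j)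

open Finset Polynomial
open scoped Nat

theorem eq_of_pascal_recurrence {M : Type*} [Add M] {d e : ℕ → ℕ → M}
    (hd : ∀ i j, d (i + 1) (j + 1) = d i (j + 1) + d (i + 1) j)
    (he : ∀ i j, e (i + 1) (j + 1) = e i (j + 1) + e (i + 1) j)
    (h_left : ∀ j, d 0 j = e 0 j) (h_right : ∀ i, d i 0 = e i 0) : d = e := by
  funext i j
  induction i generalizing j with
  | zero => exact h_left j
  | succ i ihi =>
    induction j with
    | zero => exact h_right _
    | succ j ihj => rw [hd, he, ihi, ihj]

theorem choose_mul_factorial_mul_factorial_of_add_eq_succ {m i j : ℕ} (h : i + j = m + 1) :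
    m.choose i * i ! * j ! = j * m ! := by
  cases j with
  | zero => simp [Nat.choose_eq_zero_of_lt (show m < i by omega)]
  | succ j =>
    obtain rfl : m = i + j := by omega
    have hchoose := Nat.choose_mul_factorial_mul_factorial (Nat.le_add_right i j)
    rw [add_tsub_cancel_left] at hchoose
    rw [Nat.factorial_succ, ← hchoose]
    ring

theorem dcoef_eq_choose_sub_choose (i j : ℕ) :
    dcoef i j = ((i + j - 1).choose i : ℚ) - (i + j - 1).choose j := by
  rcases hm : i + j with _ | m
  · obtain ⟨rfl, rfl⟩ : i = 0 ∧ j = 0 := by omega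
    simp [dcoef]
  · have hi : (m.choose i * i ! * j ! : ℚ) = j * m ! := by
      exact_mod_cast choose_mul_factorial_mul_factorial_of_add_eq_succ hm
    have hj : (m.choose j * j ! * i ! : ℚ) = i * m ! := by
      exact_mod_cast choose_mul_factorial_mul_factorial_of_add_eq_succ (by omega : j + i = m + 1)
    rw [dcoef, hm, Nat.add_sub_cancel, div_eq_iff (by positivity)]
    linear_combination hj - hi

theorem dcoef_zero_zero : dcoef 0 0 = 0 := by simp [dcoef]

theorem dcoef_zero_succ (j : ℕ) : dcoef 0 (j + 1) = 1 := by
  simp [dcoef_eq_choose_sub_choose]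

theorem dcoef_antisymm (i j : ℕ) : dcoef i j = -dcoef j i := by
  simp only [dcoef, Nat.add_comm j i]
  ring

theorem dcoef_succ_zero (i : ℕ) : dcoef (i + 1) 0 = -1 := by
  rw [dcoef_antisymm, dcoef_zero_succ]

theorem dcoef_succ_succ (i j : ℕ) :
    dcoef (i + 1) (j + 1) = dcoef i (j + 1) + dcoef (i + 1) j := by
  simp only [dcoef_eq_choose_sub_choose, show i + 1 + (j + 1) - 1 = i + j + 1 by omega,
    show i + (j + 1) - 1 = i + j by omega, show i + 1 + j - 1 = i + j by omega,
    Nat.choose_succ_succ', Nat.cast_add]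
  ring

theorem dcoef_tsub {i n : ℕ} (hi : i ≤ n) :
    dcoef i (n - i) = ((n : ℚ) - 2 * i) * (n - 1)! / (i ! * (n - i)!) := by
  rw [dcoef, Nat.add_sub_cancel' hi, Nat.cast_sub hi]
  ring

theorem iterate_derivative_mul_eq_sum_antidiagonal {R : Type*} [CommSemiring R] (p q : R[X])
    (m : ℕ) :
    derivative^[m] (p * q) =
      ∑ x ∈ antidiagonal m, m.choose x.2 • (derivative^[x.1] p * derivative^[x.2] q) := by
  rw [iterate_derivative_mul, ← Nat.sum_antidiagonal_swap,
    Nat.sum_antidiagonal_eq_sum_range_succ_mk]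
  rfl

theorem iterate_derivative_wronskian {R : Type*} [CommRing R] [Module ℚ R] (f g : R[X])
    (m : ℕ) :
    derivative^[m] (wronskian f g) =
      ∑ x ∈ antidiagonal (m + 1), dcoef x.1 x.2 • (derivative^[x.1] f * derivative^[x.2] g) := by
  have hcoef : ∀ x ∈ antidiagonal (m + 1),
      dcoef x.1 x.2 • (derivative^[x.1] f * derivative^[x.2] g) =
        m.choose x.1 • (derivative^[x.1] f * derivative^[x.2] g) -
          m.choose x.2 • (derivative^[x.1] f * derivative^[x.2] g) := by
    intro x hx
    rw [HasAntidiagonal.mem_antidiagonal] at hx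
    rw [dcoef_eq_choose_sub_choose, hx, Nat.add_sub_cancel, sub_smul, Nat.cast_smul_eq_nsmul,
      Nat.cast_smul_eq_nsmul]
  rw [sum_congr rfl hcoef, sum_sub_distrib, Nat.sum_antidiagonal_succ',
    Nat.sum_antidiagonal_succ, wronskian, iterate_map_sub,
    iterate_derivative_mul_eq_sum_antidiagonal, iterate_derivative_mul_eq_sum_antidiagonal]
  simp only [Nat.choose_succ_self, zero_smul, zero_add]
  congr 1
  refine sum_congr rfl fun x hx => ?_
  rw [Nat.choose_symm_of_eq_add (HasAntidiagonal.mem_antidiagonal.mp hx).symm,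
    Function.iterate_succ_apply]

/-- **Statement 2.** For `f, g ∈ R[t]` over a commutative `ℚ`-algebra `R` and `n ≥ 1`,
`(fg' - f'g)^{(n-1)} = Σ_{i=0}^{n} d_{i,n-i} f^{(i)} g^{(n-i)}` with
`d_{i,j} = (j-i)(i+j-1)!/(i!·j!)` (equivalently `d_{i,n-i} = (n-2i)(n-1)!/(i!(n-i)!)`);
the `d_{i,j}` are antisymmetric and are the unique solution of the recurrence
`d_{i,j} = d_{i-1,j} + d_{i,j-1}` (`i,j ≥ 1`) with boundary values
`d_{0,j} = 1 = -d_{j,0}` (`j ≥ 1`) and `d_{0,0} = 0`. -/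
theorem statement_2 (R : Type*) [CommRing R] [Algebra ℚ R]
    (f g : Polynomial R) (n : ℕ) (hn : 1 ≤ n) :
    (Polynomial.derivative^[n - 1]
        (f * Polynomial.derivative g - Polynomial.derivative f * g) =
      ∑ i ∈ Finset.range (n + 1),
        dcoef i (n - i) • (Polynomial.derivative^[i] f * Polynomial.derivative^[n - i] g)) ∧
    (∀ i, i ≤ n →
      dcoef i (n - i) =
        ((n : ℚ) - 2 * (i : ℚ)) * (Nat.factorial (n - 1)) /
          (Nat.factorial i * Nat.factorial (n - i))) ∧
    (∀ i j, dcoef i j = - dcoef j i) ∧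
    (∀ d' : ℕ → ℕ → ℚ,
      (∀ i j, 1 ≤ i → 1 ≤ j → d' i j = d' (i - 1) j + d' i (j - 1)) →
      (∀ j, 1 ≤ j → d' 0 j = 1) → (∀ j, 1 ≤ j → d' j 0 = -1) → d' 0 0 = 0 →
      d' = dcoef) := by
  refine ⟨?_, fun i => dcoef_tsub, dcoef_antisymm, ?_⟩
  · obtain ⟨m, rfl⟩ : ∃ m, n = m + 1 := ⟨n - 1, by omega⟩
    rw [Nat.add_sub_cancel, ← Nat.sum_antidiagonal_eq_sum_range_succ
      (fun i j => dcoef i j • (derivative^[i] f * derivative^[j] g))]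
    exact iterate_derivative_wronskian f g m
  · intro d' hrec h_left h_right h_zero
    refine eq_of_pascal_recurrence (fun i j => hrec (i + 1) (j + 1) i.succ_pos j.succ_pos)
      dcoef_succ_succ ?_ ?_
    · rintro (_ | j)
      · rw [h_zero, dcoef_zero_zero]
      · rw [h_left _ j.succ_pos, dcoef_zero_succ]
    · rintro (_ | i)
      · rw [h_zero, dcoef_zero_zero]
      · rw [h_right _ i.succ_pos, dcoef_succ_zero]

end WittOM
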